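/- Every nonzero object X of C admits an SCSS: a nonzero strict subobject X' that is the final subobject of X of maximal slope (equivalently, X' is semistable and μ(X'') < μ(X') for every subobject X'' of X properly containing X'). -/

import Mathlib

open CategoryTheory Limits

universe v u v' u'

variable (C : Type u) [Category.{v} C] [Preadditive C] [HasZeroObject C]
  [HasBinaryBiproducts C]
variable (D : Type u') [Category.{v'} D] [Abelian D]
variable (F : C ⥤ D) [F.Additive] [F.Faithful]
variable (V : Type*) [AddCommGroup V] [LinearOrder V] [IsOrderedAddMonoid V]

/-- The data and axioms of abstract Harder–Narasimhan theory:
an exact structure on `C` (given by its class of short strict exact sequences),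
an exact faithful functor `F : C ⥤ D` inducing bijections between strict
subobjects and subobjects of the image, a rank function on `D` and a degree
function on `C`. -/
structure HNTheory where
  /-- `SSE f g` means `0 ⟶ A ⟶ B ⟶ Z ⟶ 0` is a short strict exact sequence. -/
  SSE : ∀ ⦃A B Z : C⦄, (A ⟶ B) → (B ⟶ Z) → Prop
  sse_comp_zero : ∀ ⦃A B Z : C⦄ (f : A ⟶ B) (g : B ⟶ Z), SSE f g → f ≫ g = 0
  sse_mono : ∀ ⦃A B Z : C⦄ (f : A ⟶ B) (g : B ⟶ Z), SSE f g → Mono f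
  sse_epi : ∀ ⦃A B Z : C⦄ (f : A ⟶ B) (g : B ⟶ Z), SSE f g → Epi g
  sse_isKernel : ∀ ⦃A B Z : C⦄ (f : A ⟶ B) (g : B ⟶ Z) (hfg : SSE f g),
    Nonempty (IsLimit (KernelFork.ofι f (sse_comp_zero f g hfg)))
  sse_isCokernel : ∀ ⦃A B Z : C⦄ (f : A ⟶ B) (g : B ⟶ Z) (hfg : SSE f g),
    Nonempty (IsColimit (CokernelCofork.ofπ g (sse_comp_zero f g hfg)))
  /-- `F` is exact. -/
  F_exact : ∀ ⦃A B Z : C⦄ (f : A ⟶ B) (g : B ⟶ Z) (hfg : SSE f g),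
    (ShortComplex.mk (F.map f) (F.map g)
      (by rw [← F.map_comp, sse_comp_zero f g hfg, F.map_zero])).ShortExact
  /-- `F` induces a bijection between strict subobjects of `X` and subobjects
  of `F(X)`. -/
  strict_sub_bij : ∀ X : C,
    Function.Bijective
      (fun S : {S : Subobject X // ∃ (Z : C) (g : X ⟶ Z), SSE S.arrow g} =>
        imageSubobject (F.map S.1.arrow))
  rk : D → ℕ
  rk_iso : ∀ ⦃X Y : D⦄, (X ≅ Y) → rk X = rk Y
  rk_eq_zero_iff : ∀ X : D, rk X = 0 ↔ IsZero X
  rk_additive : ∀ (S : ShortComplex D), S.ShortExact → rk S.X₂ = rk S.X₁ + rk S.X₃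
  deg : C → V
  deg_iso : ∀ ⦃X Y : C⦄, (X ≅ Y) → deg X = deg Y
  deg_additive : ∀ ⦃A B Z : C⦄ (f : A ⟶ B) (g : B ⟶ Z), SSE f g → deg B = deg A + deg Z
  deg_le_of_FIso : ∀ ⦃X Y : C⦄ (f : X ⟶ Y), IsIso (F.map f) → deg X ≤ deg Y
  deg_eq_iff_of_FIso : ∀ ⦃X Y : C⦄ (f : X ⟶ Y), IsIso (F.map f) → (deg X = deg Y ↔ IsIso f)

namespace HNTheory

variable {C D F V}

/-- The subobject `F(X') ⊆ F(X)` associated to a subobject `X' ⊆ X`. -/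
noncomputable def FSub (_h : HNTheory C D F V) {X : C} (S : Subobject X) :
    Subobject (F.obj X) :=
  imageSubobject (F.map S.arrow)

variable (h : HNTheory C D F V)

/-- The rank of an object of `C` is the rank of its image in `D`. -/
def rkC (X : C) : ℕ := h.rk (F.obj X)

/-- A subobject is strict if it is an admissible (strict) monomorphism,
i.e. fits in a short strict exact sequence. -/
def StrictSub {X : C} (S : Subobject X) : Prop :=
  ∃ (Z : C) (g : X ⟶ Z), h.SSE S.arrow g

/-- `μ(X) ≤ μ(Y)`, in cross-multiplied form `rk(Y) • deg(X) ≤ rk(X) • deg(Y)`. -/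
def muLE (X Y : C) : Prop := h.rkC Y • h.deg X ≤ h.rkC X • h.deg Y

/-- `μ(X) < μ(Y)`, in cross-multiplied form. -/
def muLT (X Y : C) : Prop := h.rkC Y • h.deg X < h.rkC X • h.deg Y

/-- `μ(X) = μ(Y)`, in cross-multiplied form. -/
def muEQ (X Y : C) : Prop := h.rkC Y • h.deg X = h.rkC X • h.deg Y

/-- A nonzero object is semistable if every nonzero proper subobject has
slope at most that of the ambient object. -/
def Semistable (X : C) : Prop :=
  ¬ IsZero X ∧ ∀ S : Subobject X, ¬ IsZero ((S : C)) → S ≠ ⊤ → h.muLE (S : C) X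

/-- A subobject of maximal slope. -/
def MaxSlopeSub {X : C} (S : Subobject X) : Prop :=
  ¬ IsZero ((S : C)) ∧ ∀ T : Subobject X, ¬ IsZero ((T : C)) → h.muLE (T : C) (S : C)

/-- `G` is (a model of) the `i`-th graded piece `c i.succ / c i.castSucc` of a
filtration `c` by strict subobjects. -/
def GrAt {X : C} {N : ℕ} (c : Fin (N + 1) → Subobject X) (i : Fin N) (G : C) : Prop :=
  ∃ (hle : c i.castSucc ≤ c i.succ) (p : ((c i.succ : Subobject X) : C) ⟶ G),
    h.SSE (Subobject.ofLE (c i.castSucc) (c i.succ) hle) p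

/-- `c` is a Harder–Narasimhan filtration. -/
def IsHNFilt {X : C} {N : ℕ} (c : Fin (N + 1) → Subobject X) : Prop :=
  StrictMono c ∧ c 0 = ⊥ ∧ c (Fin.last N) = ⊤ ∧ (∀ i, h.StrictSub (c i)) ∧
  (∀ (i : Fin N) (G : C), h.GrAt c i G → h.Semistable G) ∧
  (∀ (i j : Fin N), i < j → ∀ (Gi Gj : C),
    h.GrAt c i Gi → h.GrAt c j Gj → h.muLT Gj Gi)

end HNTheory

/-!
Strict subobjects of `X` correspond to subobjects of `F X`, so two strict subobjects `A`, `T` have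
a strict sum `A ⊔ T` and intersection `A ⊓ T`. The comparison map `T/(A ⊓ T) ⟶ (A ⊔ T)/A` is an
`F`-isomorphism, so rank is additive and degree supermodular on this lattice.

A strict subobject of maximal slope exists by induction on the rank: if `X` is not one, take a
strict `A` of maximal rank with `μ(A) > μ(X)` and such a subobject `S` of `A`. By maximality of
the rank, every strict subobject strictly above `A` has slope `≤ μ(X) < μ(A)`, and then
supermodularity applied to `A` and any strict `T` gives `μ(T) ≤ μ(S)`. Now take `S` of maximal rank among them. By supermodularity, the
sum of `S` with another strict subobject of maximal slope again has maximal slope, so equals `S`.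
Finally every subobject sits in a strict one with the same rank and no smaller degree (the strict
subobject with the same image under `F`), which reduces arbitrary subobjects to strict ones.
-/

theorem exists_max_of_le_bound {α : Type*} {P : α → Prop} (f : α → ℕ) {n : ℕ}
    (hP : ∃ a, P a) (hbound : ∀ a, P a → f a ≤ n) : ∃ a, P a ∧ ∀ b, P b → f b ≤ f a := by
  classical
  obtain ⟨a₀, ha₀⟩ := hP
  obtain ⟨a, ha, hfa⟩ := Nat.findGreatest_spec (P := fun r => ∃ a, P a ∧ f a = r)
    (hbound a₀ ha₀) ⟨a₀, ha₀, rfl⟩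
  exact ⟨a, ha, fun b hb => hfa ▸ Nat.le_findGreatest (hbound b hb) ⟨b, hb, rfl⟩⟩

section SecondIsomorphism

/-! For subobjects `P ⟶ J` and `T ⟶ J` of `J ⊆ Y`, the map `φ : T/N ⟶ J/P` induced by `u` is the
comparison of the second isomorphism theorem `T/(P ∩ T) ≅ (P + T)/P`: it is epi when `P + T = J`
and mono when `N = P ∩ T`. -/

variable {𝒜 : Type*} [Category 𝒜] [Abelian 𝒜] {Y J T P N ZJ ZT : 𝒜} {ιJ : J ⟶ Y} {ιT : T ⟶ Y}
  {u : T ⟶ J} {i : P ⟶ J} {q : J ⟶ ZJ} {j : N ⟶ T} {p : T ⟶ ZT} {φ : ZT ⟶ ZJ}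

theorem epi_of_le_sup [Mono ιJ] {wJ : i ≫ q = 0} (hJ : (ShortComplex.mk i q wJ).ShortExact)
    (hu : u ≫ ιJ = ιT) (hφ : p ≫ φ = u ≫ q)
    (hsup : imageSubobject ιJ ≤ imageSubobject (i ≫ ιJ) ⊔ imageSubobject ιT) : Epi φ := by
  have := hJ.epi_g
  refine Preadditive.epi_of_cancel_zero _ fun {W} w hw => ?_
  set K := kernelSubobject (q ≫ w)
  have hK : imageSubobject (i ≫ ιJ) ⊔ imageSubobject ιT ≤ Subobject.mk (K.arrow ≫ ιJ) := by
    refine sup_le (imageSubobject_le_mk _ _ (factorThruKernelSubobject _ i ?_) ?_)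
      (imageSubobject_le_mk _ _ (factorThruKernelSubobject _ u ?_) ?_)
    · rw [← Category.assoc, wJ, zero_comp]
    · rw [← Category.assoc, factorThruKernelSubobject_comp_arrow]
    · rw [← Category.assoc, ← hφ, Category.assoc, hw, comp_zero]
    · rw [← Category.assoc, factorThruKernelSubobject_comp_arrow, hu]
  obtain ⟨r, hr⟩ : ∃ r : J ⟶ (K : 𝒜), r ≫ K.arrow ≫ ιJ = ιJ :=
    (Subobject.mk_factors_iff (K.arrow ≫ ιJ) ιJ).1 <| Subobject.factors_of_le ιJ (hsup.trans hK)
      (by simpa using imageSubobject_factors_comp_self ιJ (𝟙 _))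
  have hrK : r ≫ K.arrow = 𝟙 J := by rw [← cancel_mono ιJ, Category.assoc, hr, Category.id_comp]
  refine zero_of_epi_comp q ?_
  rw [← Category.id_comp (q ≫ w), ← hrK, Category.assoc, kernelSubobject_arrow_comp, comp_zero]

theorem mono_of_inf_le [Mono ιT] {wJ : i ≫ q = 0} (hJ : (ShortComplex.mk i q wJ).ShortExact)
    {wT : j ≫ p = 0} (hT : (ShortComplex.mk j p wT).ShortExact)
    (hu : u ≫ ιJ = ιT) (hφ : p ≫ φ = u ≫ q)
    (hinf : imageSubobject (i ≫ ιJ) ⊓ imageSubobject ιT ≤ imageSubobject (j ≫ ιT)) :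
    Mono φ := by
  have := hJ.mono_f
  have := hT.mono_f
  have := hT.epi_g
  refine Preadditive.mono_of_cancel_zero _ fun {W} v hv => ?_
  have hsq := pullback.condition (f := v) (g := p)
  obtain ⟨s, hs⟩ := hJ.exact.lift' (pullback.snd v p ≫ u) <| by
    rw [Category.assoc, ← hφ, ← Category.assoc, ← hsq, Category.assoc, hv, comp_zero]
  have hfac : (imageSubobject (j ≫ ιT)).Factors (pullback.snd v p ≫ ιT) := by
    refine Subobject.factors_of_le _ hinf ((Subobject.inf_factors _).2 ⟨?_, ?_⟩)
    · rw [← hu, ← Category.assoc, ← hs, Category.assoc]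
      exact imageSubobject_factors_comp_self _ _
    · exact imageSubobject_factors_comp_self _ _
  rw [imageSubobject_mono] at hfac
  obtain ⟨e, he⟩ : ∃ e : pullback v p ⟶ N, e ≫ j ≫ ιT = pullback.snd v p ≫ ιT :=
    (Subobject.mk_factors_iff (j ≫ ιT) _).1 hfac
  have hsnd : pullback.snd v p = e ≫ j := by rw [← cancel_mono ιT, Category.assoc, he]
  exact zero_of_epi_comp (pullback.fst v p) (by rw [hsq, hsnd, Category.assoc, wT, comp_zero])

end SecondIsomorphism

namespace HNTheory

omit [HasZeroObject C] [HasBinaryBiproducts C]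

section Slopes

/-! `rb • da ≤ ra • db` encodes `μ(a) ≤ μ(b)`. Below, `J` and `M` stand for `A ⊔ T` and `A ⊓ T`:
ranks are additive (`hr`) and degrees supermodular (`hd`). -/

variable {V}

theorem slope_le_trans {ra rb rc : ℕ} {da db dc : V} (hb : rb ≠ 0)
    (hab : rb • da ≤ ra • db) (hbc : rc • db ≤ rb • dc) : rc • da ≤ ra • dc := by
  apply le_of_nsmul_le_nsmul_right hb
  calc rb • rc • da = rc • rb • da := smul_comm _ _ _
    _ ≤ rc • ra • db := nsmul_le_nsmul_right hab rc
    _ = ra • rc • db := smul_comm _ _ _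
    _ ≤ ra • rb • dc := nsmul_le_nsmul_right hbc ra
    _ = rb • ra • dc := smul_comm _ _ _

variable {rA rT rJ rM : ℕ} {dA dT dJ dM : V}

theorem slope_le_sup (hr : rA + rT = rJ + rM) (hd : dA + dT ≤ dJ + dM)
    (hAT : rT • dA ≤ rA • dT) (hMA : rA • dM ≤ rM • dA) : rJ • dA ≤ rA • dJ := by
  have key : rJ • dA + rM • dA ≤ rA • dJ + rM • dA :=
    calc rJ • dA + rM • dA = rA • dA + rT • dA := by rw [← add_smul, ← hr, add_smul]
      _ ≤ rA • dA + rA • dT := add_le_add_right hAT _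
      _ ≤ rA • dJ + rA • dM := by rw [← smul_add, ← smul_add]; exact nsmul_le_nsmul_right hd rA
      _ ≤ rA • dJ + rM • dA := add_le_add_right hMA _
  exact le_of_add_le_add_right key

theorem slope_le_of_sup_le {rS : ℕ} {dS : V} (hA : rA ≠ 0) (hAJ : rA ≤ rJ)
    (hr : rA + rT = rJ + rM) (hd : dA + dT ≤ dJ + dM) (hJA : rA • dJ ≤ rJ • dA)
    (hAS : rS • dA ≤ rA • dS) (hMS : rS • dM ≤ rM • dS) : rS • dT ≤ rT • dS := by
  obtain ⟨q, rfl⟩ := Nat.exists_eq_add_of_le hAJ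
  have hrT : rT = rM + q := by omega
  have hT : rA • dT ≤ q • dA + rA • dM := by
    have key : rA • dA + rA • dT ≤ rA • dA + (q • dA + rA • dM) :=
      calc rA • dA + rA • dT ≤ rA • dJ + rA • dM := by
            rw [← smul_add, ← smul_add]; exact nsmul_le_nsmul_right hd rA
        _ ≤ (rA + q) • dA + rA • dM := add_le_add_left hJA _
        _ = rA • dA + (q • dA + rA • dM) := by rw [add_smul, add_assoc]
    exact le_of_add_le_add_left key
  apply le_of_nsmul_le_nsmul_right hA
  calc rA • rS • dT = rS • rA • dT := smul_comm _ _ _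
    _ ≤ rS • (q • dA + rA • dM) := nsmul_le_nsmul_right hT rS
    _ = q • rS • dA + rA • rS • dM := by rw [smul_add, smul_comm rS q, smul_comm rS rA]
    _ ≤ q • rA • dS + rA • rM • dS :=
        add_le_add (nsmul_le_nsmul_right hAS q) (nsmul_le_nsmul_right hMS rA)
    _ = rA • rT • dS := by rw [hrT, smul_comm q rA, ← smul_add, ← add_smul, add_comm q]

end Slopes

variable {C D F V}

section

omit [IsOrderedAddMonoid V]

theorem isZero_of_isZero_map {A : C} (hA : IsZero (F.obj A)) : IsZero A :=
  (IsZero.iff_id_eq_zero A).2 (F.zero_of_map_zero _ (by rw [F.map_id]; exact hA.eq_of_src _ _))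

variable (h : HNTheory C D F V)

section

omit [F.Faithful]

theorem rkC_iso {A B : C} (e : A ≅ B) : h.rkC A = h.rkC B := h.rk_iso (F.mapIso e)

theorem rkC_eq_add_of_sse {A B Z : C} {f : A ⟶ B} {g : B ⟶ Z} (hfg : h.SSE f g) :
    h.rkC B = h.rkC A + h.rkC Z :=
  h.rk_additive _ (h.F_exact f g hfg)

theorem isIso_of_sse_of_isZero {A B Z : C} {f : A ⟶ B} {g : B ⟶ Z} (hfg : h.SSE f g)
    (hZ : IsZero Z) : IsIso f :=
  let ⟨hk⟩ := h.sse_isKernel f g hfg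
  KernelFork.IsLimit.isIso_ι _ hk (hZ.eq_of_tgt _ _)

theorem muLE_iso {A A' B B' : C} (eA : A ≅ A') (eB : B ≅ B') :
    h.muLE A B ↔ h.muLE A' B' := by
  rw [muLE, muLE, h.rkC_iso eA, h.rkC_iso eB, h.deg_iso eA, h.deg_iso eB]

variable {X : C}

theorem exists_strictSub_FSub_eq (y : Subobject (F.obj X)) :
    ∃ S : Subobject X, h.StrictSub S ∧ h.FSub S = y :=
  let ⟨⟨S, hS⟩, hy⟩ := (h.strict_sub_bij X).2 y
  ⟨S, hS, hy⟩

theorem FSub_mk {A : C} (m : A ⟶ X) [Mono m] :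
    h.FSub (Subobject.mk m) = imageSubobject (F.map m) := by
  show imageSubobject (F.map (Subobject.mk m).arrow) = _
  rw [← Subobject.underlyingIso_hom_comp_eq_mk m, F.map_comp]
  exact imageSubobject_iso_comp _ _

theorem rkC_deg_of_sse {M A : Subobject X} {N : Subobject (A : C)} {Z : C} {q : (A : C) ⟶ Z}
    (hq : h.SSE N.arrow q) (hNM : Subobject.mk (N.arrow ≫ A.arrow) = M) :
    h.rkC (A : C) = h.rkC (M : C) + h.rkC Z ∧ h.deg (A : C) = h.deg (M : C) + h.deg Z := by
  have e : (N : C) ≅ (M : C) :=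
    (Subobject.underlyingIso (N.arrow ≫ A.arrow)).symm ≪≫ Subobject.isoOfEq _ _ hNM
  rw [h.rkC_eq_add_of_sse hq, h.deg_additive _ _ hq, h.rkC_iso e, h.deg_iso e]
  exact ⟨rfl, rfl⟩

theorem rkC_le_of_strictSub {T : Subobject X} (hT : h.StrictSub T) : h.rkC (T : C) ≤ h.rkC X := by
  obtain ⟨Z, g, hg⟩ := hT
  rw [h.rkC_eq_add_of_sse hg]
  exact Nat.le_add_right _ _

theorem rkC_top : h.rkC ((⊤ : Subobject X) : C) = h.rkC X :=
  h.rkC_iso (asIso (⊤ : Subobject X).arrow)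

end

variable {X : C}

theorem rkC_eq_zero_iff {A : C} : h.rkC A = 0 ↔ IsZero A :=
  (h.rk_eq_zero_iff _).trans ⟨isZero_of_isZero_map, F.map_isZero⟩

theorem rkC_ne_zero {A : C} (hA : ¬ IsZero A) : h.rkC A ≠ 0 :=
  fun h0 => hA (h.rkC_eq_zero_iff.1 h0)

/-- The kernel of `F f` is `F K` for a strict subobject `K`; by faithfulness `K ⟶ X ⟶ Y`
vanishes, so `K = 0`. -/
theorem mono_map (h : HNTheory C D F V) {Y : C} (f : X ⟶ Y) [Mono f] : Mono (F.map f) := by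
  obtain ⟨K, -, hFK⟩ := h.exists_strictSub_FSub_eq (kernelSubobject (F.map f))
  have hKf : F.map K.arrow ≫ F.map f = 0 := by
    have hz : (h.FSub K).arrow ≫ F.map f = 0 := by
      rw [hFK]; exact kernelSubobject_arrow_comp _
    rw [← imageSubobject_arrow_comp (F.map K.arrow), Category.assoc]
    exact (congrArg _ hz).trans comp_zero
  have hK : K.arrow = 0 := zero_of_comp_mono f (F.zero_of_map_zero _ (by rwa [F.map_comp]))
  have hker : kernelSubobject (F.map f) = ⊥ := by
    rw [← hFK]
    show imageSubobject (F.map K.arrow) = ⊥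
    rw [hK, F.map_zero, imageSubobject_zero]
  apply Preadditive.mono_of_kernel_zero
  have hι : (kernelSubobject (F.map f)).arrow = 0 := by rw [hker]; exact Subobject.bot_arrow
  rw [← kernelSubobject_arrow', hι, comp_zero]

theorem factors_FSub_iff (S : Subobject X) {W : D} (g : W ⟶ F.obj X) :
    (h.FSub S).Factors g ↔ ∃ u, u ≫ F.map S.arrow = g := by
  have := h.mono_map S.arrow
  show (imageSubobject (F.map S.arrow)).Factors g ↔ _
  rw [imageSubobject_mono]
  exact Subobject.mk_factors_iff _ _

theorem factors_FSub_mk_iff {A : C} (m : A ⟶ X) [Mono m] {W : D} (g : W ⟶ F.obj X) :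
    (h.FSub (Subobject.mk m)).Factors g ↔ ∃ u, u ≫ F.map m = g := by
  have := h.mono_map m
  rw [FSub_mk, imageSubobject_mono]
  exact Subobject.mk_factors_iff _ _

theorem factors_of_factors_FSub {S : Subobject X} (hS : h.StrictSub S) {W : C} {t : W ⟶ X}
    (ht : (h.FSub S).Factors (F.map t)) : S.Factors t := by
  obtain ⟨Z, g, hSg⟩ := hS
  obtain ⟨u, hu⟩ := (h.factors_FSub_iff S _).1 ht
  have htg : t ≫ g = 0 := F.zero_of_map_zero _ (by
    rw [F.map_comp, ← hu, Category.assoc, ← F.map_comp, h.sse_comp_zero _ _ hSg, F.map_zero,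
      comp_zero])
  obtain ⟨hk⟩ := h.sse_isKernel _ _ hSg
  obtain ⟨l, hl⟩ := KernelFork.IsLimit.lift' hk t htg
  rw [← hl]
  exact Subobject.factors_comp_arrow l

theorem le_of_FSub_le {S T : Subobject X} (hS : h.StrictSub S) (hle : h.FSub T ≤ h.FSub S) :
    T ≤ S :=
  Subobject.le_of_factors <| h.factors_of_factors_FSub hS <|
    Subobject.factors_of_le _ hle ((h.factors_FSub_iff T _).2 ⟨𝟙 _, Category.id_comp _⟩)

theorem strictSub_top : h.StrictSub (⊤ : Subobject X) := by
  obtain ⟨S, hS, hFS⟩ := h.exists_strictSub_FSub_eq (⊤ : Subobject (F.obj X))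
  obtain ⟨Z, g, hSg⟩ := id hS
  have := h.mono_map S.arrow
  have hFS' : IsIso (F.map S.arrow) := by
    rw [Subobject.isIso_iff_mk_eq_top, ← imageSubobject_mono]
    exact hFS
  have := h.isIso_of_sse_of_isZero hSg
    (isZero_of_isZero_map ((h.F_exact _ _ hSg).isIso_f_iff.1 hFS'))
  rwa [(Subobject.isIso_arrow_iff_eq_top S).1 this] at hS

theorem deg_eq_zero_of_isZero {A : C} (hA : IsZero A) : h.deg A = 0 := by
  obtain ⟨Z, g, hg⟩ := h.strictSub_top (X := A)
  have := h.sse_epi _ _ hg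
  have hdeg := h.deg_additive _ _ hg
  rw [h.deg_iso ((hA.of_iso (asIso (⊤ : Subobject A).arrow)).iso hA),
    h.deg_iso ((hA.of_epi g).iso hA)] at hdeg
  exact left_eq_add.1 hdeg

theorem muLE_of_isZero {A : C} (hA : IsZero A) (B : C) : h.muLE A B := by
  rw [muLE, h.deg_eq_zero_of_isZero hA, h.rkC_eq_zero_iff.2 hA, smul_zero, zero_smul]

theorem strictSub_mk_comp {A : Subobject X} (hA : h.StrictSub A) {N : Subobject (A : C)}
    (hN : h.StrictSub N) : h.StrictSub (Subobject.mk (N.arrow ≫ A.arrow)) := by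
  obtain ⟨S, hS, hFS⟩ := h.exists_strictSub_FSub_eq (h.FSub (Subobject.mk (N.arrow ≫ A.arrow)))
  have := h.mono_map A.arrow
  obtain ⟨w, hw⟩ := (h.factors_FSub_mk_iff _ (F.map S.arrow)).1
    (hFS ▸ (h.factors_FSub_iff S _).2 ⟨𝟙 _, Category.id_comp _⟩)
  rw [F.map_comp] at hw
  have hSA : S ≤ A := Subobject.le_of_factors <| h.factors_of_factors_FSub hA <|
    (h.factors_FSub_iff A _).2 ⟨w ≫ F.map N.arrow, by rw [Category.assoc, hw]⟩
  have hj : N.Factors (Subobject.ofLE S A hSA) := h.factors_of_factors_FSub hN <|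
    (h.factors_FSub_iff N _).2 ⟨w, by
      rw [← cancel_mono (F.map A.arrow), Category.assoc, hw, ← F.map_comp, Subobject.ofLE_arrow]⟩
  have hSle : S ≤ Subobject.mk (N.arrow ≫ A.arrow) :=
    Subobject.le_mk_of_comm (N.factorThru _ hj) <| by
      rw [← Category.assoc, Subobject.factorThru_arrow, Subobject.ofLE_arrow]
  rwa [le_antisymm hSle (h.le_of_FSub_le hS hFS.ge)] at hS

theorem exists_sse_of_le {M A : Subobject X} (hM : h.StrictSub M) (hle : M ≤ A) :
    ∃ (N : Subobject (A : C)) (Z : C) (q : (A : C) ⟶ Z),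
      h.SSE N.arrow q ∧ Subobject.mk (N.arrow ≫ A.arrow) = M := by
  set i := Subobject.ofLE M A hle
  obtain ⟨N, hN, hFN⟩ := h.exists_strictSub_FSub_eq (h.FSub (Subobject.mk i))
  obtain ⟨Z, q, hq⟩ := id hN
  refine ⟨N, Z, q, hq, le_antisymm ?_ ?_⟩
  · obtain ⟨w, hw⟩ := (h.factors_FSub_mk_iff i _).1
      (hFN ▸ (h.factors_FSub_iff N _).2 ⟨𝟙 _, Category.id_comp _⟩)
    refine Subobject.mk_le_of_comm (M.factorThru _ (h.factors_of_factors_FSub hM ?_))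
      (Subobject.factorThru_arrow _ _ _)
    refine (h.factors_FSub_iff M _).2 ⟨w, ?_⟩
    rw [F.map_comp, ← hw, Category.assoc, ← F.map_comp, Subobject.ofLE_arrow]
  · have hi : N.Factors i := h.factors_of_factors_FSub hN
      (hFN ▸ (h.factors_FSub_mk_iff i _).2 ⟨𝟙 _, Category.id_comp _⟩)
    refine Subobject.le_mk_of_comm (N.factorThru i hi) ?_
    rw [← Category.assoc, Subobject.factorThru_arrow, Subobject.ofLE_arrow]

theorem rkC_lt_of_lt {M A : Subobject X} (hM : h.StrictSub M) (hlt : M < A) :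
    h.rkC (M : C) < h.rkC (A : C) := by
  obtain ⟨N, Z, q, hq, hNM⟩ := h.exists_sse_of_le hM hlt.le
  rw [(h.rkC_deg_of_sse hq hNM).1, Nat.lt_add_right_iff_pos, Nat.pos_iff_ne_zero]
  refine h.rkC_ne_zero fun hZ => hlt.ne ?_
  have := h.isIso_of_sse_of_isZero hq hZ
  exact hNM.symm.trans ((Subobject.mk_eq_mk_of_comm _ _ (asIso N.arrow) rfl).trans A.mk_arrow)

theorem isIso_map_of_sup_inf {A T J M : Subobject X} (hTJ : T ≤ J)
    (hsup : h.FSub J ≤ h.FSub A ⊔ h.FSub T) (hinf : h.FSub A ⊓ h.FSub T ≤ h.FSub M)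
    {P : Subobject (J : C)} {ZJ : C} {qJ : (J : C) ⟶ ZJ} (hqJ : h.SSE P.arrow qJ)
    (hPA : Subobject.mk (P.arrow ≫ J.arrow) = A)
    {N : Subobject (T : C)} {ZT : C} {qT : (T : C) ⟶ ZT} (hqT : h.SSE N.arrow qT)
    (hNM : Subobject.mk (N.arrow ≫ T.arrow) = M)
    {φ : ZT ⟶ ZJ} (hφ : qT ≫ φ = Subobject.ofLE T J hTJ ≫ qJ) : IsIso (F.map φ) := by
  have := h.mono_map J.arrow
  have := h.mono_map T.arrow
  have hu : F.map (Subobject.ofLE T J hTJ) ≫ F.map J.arrow = F.map T.arrow := by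
    rw [← F.map_comp, Subobject.ofLE_arrow]
  have hFφ : F.map qT ≫ F.map φ = F.map (Subobject.ofLE T J hTJ) ≫ F.map qJ := by
    rw [← F.map_comp, hφ, F.map_comp]
  have hA : h.FSub A = imageSubobject (F.map P.arrow ≫ F.map J.arrow) := by
    rw [← hPA, h.FSub_mk, F.map_comp]
  have hM : h.FSub M = imageSubobject (F.map N.arrow ≫ F.map T.arrow) := by
    rw [← hNM, h.FSub_mk, F.map_comp]
  have := epi_of_le_sup (h.F_exact _ _ hqJ) hu hFφ (hA ▸ hsup)
  have := mono_of_inf_le (h.F_exact _ _ hqJ) (h.F_exact _ _ hqT) hu hFφ (hA ▸ hM ▸ hinf)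
  exact isIso_of_mono_of_epi _

end

variable (h : HNTheory C D F V) {X : C}

theorem muLE_trans {A B E : C} (hB : ¬ IsZero B) (hAB : h.muLE A B) (hBE : h.muLE B E) :
    h.muLE A E :=
  slope_le_trans (h.rkC_ne_zero hB) hAB hBE

theorem exists_saturation (T : Subobject X) :
    ∃ S : Subobject X, h.StrictSub S ∧ T ≤ S ∧ h.rkC (S : C) = h.rkC (T : C) ∧
      h.muLE (T : C) (S : C) := by
  obtain ⟨S, hS, hFS⟩ := h.exists_strictSub_FSub_eq (h.FSub T)
  have hTS : T ≤ S := h.le_of_FSub_le hS hFS.ge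
  obtain ⟨u, hu⟩ := (h.factors_FSub_iff T (F.map S.arrow)).1
    (hFS ▸ (h.factors_FSub_iff S _).2 ⟨𝟙 _, Category.id_comp _⟩)
  have := h.mono_map T.arrow
  have := h.mono_map S.arrow
  have hl : F.map (Subobject.ofLE T S hTS) ≫ F.map S.arrow = F.map T.arrow := by
    rw [← F.map_comp, Subobject.ofLE_arrow]
  have : IsIso (F.map (Subobject.ofLE T S hTS)) :=
    ⟨u, by rw [← cancel_mono (F.map T.arrow), Category.assoc, hu, hl, Category.id_comp],
      by rw [← cancel_mono (F.map S.arrow), Category.assoc, hl, hu, Category.id_comp]⟩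
  have hrk : h.rkC (S : C) = h.rkC (T : C) :=
    (h.rk_iso (asIso (F.map (Subobject.ofLE T S hTS)))).symm
  refine ⟨S, hS, hTS, hrk, ?_⟩
  rw [muLE, hrk]
  exact nsmul_le_nsmul_right (h.deg_le_of_FIso _ this) _

theorem exists_strict_sup_inf {A T : Subobject X} (hA : h.StrictSub A) (hT : h.StrictSub T) :
    ∃ J M : Subobject X, h.StrictSub J ∧ h.StrictSub M ∧ A ≤ J ∧ T ≤ J ∧ M ≤ A ∧
      h.rkC (A : C) + h.rkC (T : C) = h.rkC (J : C) + h.rkC (M : C) ∧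
      h.deg (A : C) + h.deg (T : C) ≤ h.deg (J : C) + h.deg (M : C) := by
  obtain ⟨J, hJ, hFJ⟩ := h.exists_strictSub_FSub_eq (h.FSub A ⊔ h.FSub T)
  obtain ⟨M, hM, hFM⟩ := h.exists_strictSub_FSub_eq (h.FSub A ⊓ h.FSub T)
  have hAJ : A ≤ J := h.le_of_FSub_le hJ (le_sup_left.trans hFJ.ge)
  have hTJ : T ≤ J := h.le_of_FSub_le hJ (le_sup_right.trans hFJ.ge)
  have hMA : M ≤ A := h.le_of_FSub_le hA (hFM.le.trans inf_le_left)
  have hMT : M ≤ T := h.le_of_FSub_le hT (hFM.le.trans inf_le_right)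
  obtain ⟨P, ZJ, qJ, hqJ, hPA⟩ := h.exists_sse_of_le hA hAJ
  obtain ⟨N, ZT, qT, hqT, hNM⟩ := h.exists_sse_of_le hM hMT
  have hNP : N.arrow ≫ Subobject.ofLE T J hTJ ≫ qJ = 0 := by
    have hle : Subobject.mk (N.arrow ≫ T.arrow) ≤ Subobject.mk (P.arrow ≫ J.arrow) := by
      rw [hNM, hPA]; exact hMA
    have hfac : N.arrow ≫ Subobject.ofLE T J hTJ = Subobject.ofMkLEMk _ _ hle ≫ P.arrow := by
      rw [← cancel_mono J.arrow, Category.assoc, Category.assoc, Subobject.ofLE_arrow,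
        Subobject.ofMkLEMk_comp]
    rw [← Category.assoc, hfac, Category.assoc, h.sse_comp_zero _ _ hqJ, comp_zero]
  obtain ⟨hc⟩ := h.sse_isCokernel _ _ hqT
  obtain ⟨φ, hφ⟩ := CokernelCofork.IsColimit.desc' hc _ hNP
  have hiso := h.isIso_map_of_sup_inf hTJ hFJ.le hFM.ge hqJ hPA hqT hNM hφ
  obtain ⟨hrJ, hdJ⟩ := h.rkC_deg_of_sse hqJ hPA
  obtain ⟨hrT, hdT⟩ := h.rkC_deg_of_sse hqT hNM
  have hrZ : h.rkC ZT = h.rkC ZJ := h.rk_iso (asIso (F.map φ))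
  refine ⟨J, M, hJ, hM, hAJ, hTJ, hMA, by omega, ?_⟩
  calc h.deg (A : C) + h.deg (T : C) = h.deg (A : C) + h.deg (M : C) + h.deg ZT := by
        rw [hdT, add_assoc]
    _ ≤ h.deg (A : C) + h.deg (M : C) + h.deg ZJ := add_le_add_right (h.deg_le_of_FIso φ hiso) _
    _ = h.deg (J : C) + h.deg (M : C) := by rw [hdJ, add_right_comm]

def IsStrictMaxSlope (S : Subobject X) : Prop :=
  h.StrictSub S ∧ ¬ IsZero (S : C) ∧ ∀ T : Subobject X, h.StrictSub T → h.muLE (T : C) (S : C)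

variable {h}

theorem IsStrictMaxSlope.muLE {S : Subobject X} (hS : h.IsStrictMaxSlope S) (T : Subobject X) :
    h.muLE (T : C) (S : C) := by
  by_cases hT : IsZero (T : C)
  · exact h.muLE_of_isZero hT _
  obtain ⟨T', hT', -, hrk, hTT'⟩ := h.exists_saturation T
  have hT'0 : ¬ IsZero (T' : C) := fun hz => h.rkC_ne_zero hT (hrk ▸ h.rkC_eq_zero_iff.2 hz)
  exact h.muLE_trans hT'0 hTT' (hS.2.2 T' hT')

theorem IsStrictMaxSlope.exists_le_of_maxSlopeSub {S T : Subobject X} (hS : h.IsStrictMaxSlope S)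
    (hT : h.MaxSlopeSub T) : ∃ T' : Subobject X, h.IsStrictMaxSlope T' ∧ T ≤ T' := by
  obtain ⟨T', hT', hTT', hrk, hmu⟩ := h.exists_saturation T
  have hT'0 : ¬ IsZero (T' : C) := fun hz => h.rkC_ne_zero hT.1 (hrk ▸ h.rkC_eq_zero_iff.2 hz)
  refine ⟨T', ⟨hT', hT'0, fun U _ => ?_⟩, hTT'⟩
  exact h.muLE_trans hS.2.1 (hS.muLE U) (h.muLE_trans hT.1 (hT.2 S hS.2.1) hmu)

/-- Otherwise `S ⊔ T` would be a strict subobject of maximal slope and larger rank. -/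
theorem IsStrictMaxSlope.le_of_rkC_max {S T : Subobject X} (hS : h.IsStrictMaxSlope S)
    (hSmax : ∀ U : Subobject X, h.IsStrictMaxSlope U → h.rkC (U : C) ≤ h.rkC (S : C))
    (hT : h.IsStrictMaxSlope T) : T ≤ S := by
  obtain ⟨J, M, hJ, hM, hSJ, hTJ, -, hr, hd⟩ := h.exists_strict_sup_inf hS.1 hT.1
  have hSJ' : S = J := by
    by_contra hne
    have hlt := h.rkC_lt_of_lt hS.1 (lt_of_le_of_ne hSJ hne)
    have hJ0 : ¬ IsZero (J : C) := fun hz => by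
      rw [h.rkC_eq_zero_iff.2 hz] at hlt; omega
    have hJmax : h.IsStrictMaxSlope J := ⟨hJ, hJ0, fun U hU => h.muLE_trans hS.2.1 (hS.2.2 U hU)
      (slope_le_sup hr hd (hT.2.2 S hS.1) (hS.2.2 M hM))⟩
    exact absurd (hSmax J hJmax) (not_le.2 hlt)
  exact hSJ' ▸ hTJ

theorem IsStrictMaxSlope.mk_comp {A : Subobject X} (hA : h.StrictSub A)
    (hdrop : ∀ J : Subobject X, h.StrictSub J → A < J → h.muLE (J : C) (A : C))
    {S₀ : Subobject (A : C)} (hS₀ : h.IsStrictMaxSlope S₀) :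
    h.IsStrictMaxSlope (Subobject.mk (S₀.arrow ≫ A.arrow)) := by
  set S := Subobject.mk (S₀.arrow ≫ A.arrow)
  have eS : (S : C) ≅ (S₀ : C) := Subobject.underlyingIso _
  have hS0 : ¬ IsZero (S : C) := fun hz => hS₀.2.1 (hz.of_iso eS.symm)
  have hA0 : h.rkC (A : C) ≠ 0 := by
    have := h.rkC_le_of_strictSub hS₀.1
    have := h.rkC_ne_zero hS₀.2.1
    omega
  have hwithin : ∀ U : Subobject X, h.StrictSub U → U ≤ A → h.muLE (U : C) (S : C) := by
    intro U hU hUA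
    obtain ⟨N, Z, q, hq, hNU⟩ := h.exists_sse_of_le hU hUA
    have eN : (N : C) ≅ (U : C) :=
      (Subobject.underlyingIso (N.arrow ≫ A.arrow)).symm ≪≫ Subobject.isoOfEq _ _ hNU
    exact (h.muLE_iso eN eS.symm).1 (hS₀.2.2 N ⟨Z, q, hq⟩)
  refine ⟨h.strictSub_mk_comp hA hS₀.1, hS0, fun T hT => ?_⟩
  by_cases hTA : T ≤ A
  · exact hwithin T hT hTA
  obtain ⟨J, M, hJ, hM, hAJ, hTJ, hMA, hr, hd⟩ := h.exists_strict_sup_inf hA hT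
  have hAJ' : A < J := lt_of_le_of_ne hAJ fun he => hTA (he ▸ hTJ)
  exact slope_le_of_sup_le hA0 (h.rkC_lt_of_lt hA hAJ').le hr hd (hdrop J hJ hAJ')
    (hwithin A hA le_rfl) (hwithin M hM hMA)

variable (h)

theorem exists_isStrictMaxSlope (hX : ¬ IsZero X) : ∃ S : Subobject X, h.IsStrictMaxSlope S := by
  induction hn : h.rkC X using Nat.strong_induction_on generalizing X with
  | _ n ih =>
    by_cases htop : ∀ T : Subobject X, h.StrictSub T → h.muLE (T : C) X
    · refine ⟨⊤, h.strictSub_top, fun hz => hX (hz.of_iso (asIso (⊤ : Subobject X).arrow).symm),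
        fun T hT => ?_⟩
      exact (h.muLE_iso (Iso.refl _) (asIso (⊤ : Subobject X).arrow)).2 (htop T hT)
    push Not at htop
    obtain ⟨A, ⟨hA, hXA⟩, hAmax⟩ := exists_max_of_le_bound (fun A : Subobject X => h.rkC (A : C))
      (P := fun A => h.StrictSub A ∧ h.muLT X (A : C))
      (htop.imp fun _ hT => ⟨hT.1, not_le.1 hT.2⟩) (fun A hA => h.rkC_le_of_strictSub hA.1)
    have hA0 : ¬ IsZero (A : C) := fun hz => (not_le.2 hXA) (h.muLE_of_isZero hz X)
    have hAtop : A < ⊤ := lt_top_iff_ne_top.2 fun he => by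
      subst he
      exact not_le.2 hXA <|
        (h.muLE_iso (asIso (⊤ : Subobject X).arrow).symm (Iso.refl X)).1
        (le_refl (h.rkC X • h.deg X))
    have hrA : h.rkC (A : C) < n := (h.rkC_lt_of_lt hA hAtop).trans_eq (h.rkC_top.trans hn)
    obtain ⟨S₀, hS₀⟩ := ih _ hrA hA0 rfl
    refine ⟨_, IsStrictMaxSlope.mk_comp hA (fun J hJ hAJ => ?_) hS₀⟩
    have hJX : h.muLE (J : C) X :=
      not_lt.1 fun hXJ => absurd (hAmax J ⟨hJ, hXJ⟩) (not_le.2 (h.rkC_lt_of_lt hA hAJ))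
    exact h.muLE_trans hX hJX hXA.le

end HNTheory

/-- (5.7) Every nonzero object `X` of `C` admits an SCSS: a nonzero strict
subobject which is the final subobject of `X` of maximal slope. -/
theorem stmt17 (h : HNTheory C D F V) (X : C) (hX : ¬ IsZero X) :
    ∃ S : Subobject X, h.StrictSub S ∧ ¬ IsZero ((S : C)) ∧
      h.MaxSlopeSub S ∧ ∀ T : Subobject X, h.MaxSlopeSub T → T ≤ S := by
  obtain ⟨S, hS, hSmax⟩ := exists_max_of_le_bound (fun S : Subobject X => h.rkC (S : C))
    (h.exists_isStrictMaxSlope hX) (fun S hS => h.rkC_le_of_strictSub hS.1)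
  refine ⟨S, hS.1, hS.2.1, ⟨hS.2.1, fun T _ => hS.muLE T⟩, fun T hT => ?_⟩
  obtain ⟨T', hT', hTT'⟩ := hS.exists_le_of_maxSlopeSub hT
  exact hTT'.trans (hS.le_of_rkC_max hSmax hT')
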